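/- arXiv:1403.7667 — 4 statements merged into one kernel-verified Lean document; each statement's English description precedes it below -/
import Mathlib

section
/- For every infinite group Γ and every positive integer n, there exists a sequence g_1, g_2, ..., g_n of elements of Γ such that no product of a nonempty subset of distinct indices, taken in any order and with each factor being either g_i or g_i^{-1}, equals the identity. -/
/-!
Build the family one element at a time. If `g` has no trivial signed product over a finite set
`s` of indices, a signed product over `insert a s` that uses the new index `a` has the form
`A * x^(±1) * B`, where `A` and `B` range over the finitely many signed products of `g` with
distinct indices. So only finitely many choices of `x := g a` can create a trivial product, and
an infinite group leaves room to avoid all of them.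
-/

section

open Function Pointwise

variable {ι Γ : Type*} [Group Γ]

def signedProd (g : ι → Γ) (l : List (ι × Bool)) : Γ :=
  (l.map fun p => if p.2 then g p.1 else (g p.1)⁻¹).prod

def SignedDissociatedOn (s : Set ι) (g : ι → Γ) : Prop :=
  ∀ l : List (ι × Bool), l ≠ [] → (l.map Prod.fst).Nodup → (∀ p ∈ l, p.1 ∈ s) →
    signedProd g l ≠ 1

@[simp]
lemma signedProd_append (g : ι → Γ) (l₁ l₂ : List (ι × Bool)) :
    signedProd g (l₁ ++ l₂) = signedProd g l₁ * signedProd g l₂ := by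
  simp [signedProd]

@[simp]
lemma signedProd_cons (g : ι → Γ) (i : ι) (b : Bool) (l : List (ι × Bool)) :
    signedProd g ((i, b) :: l) = (if b then g i else (g i)⁻¹) * signedProd g l := by
  simp [signedProd]

lemma signedProd_update_of_forall_ne [DecidableEq ι] (g : ι → Γ) {a : ι} (x : Γ)
    {l : List (ι × Bool)} (hl : ∀ p ∈ l, p.1 ≠ a) :
    signedProd (update g a x) l = signedProd g l := by
  unfold signedProd
  congr 1
  refine List.map_congr_left fun p hp => ?_
  rw [update_of_ne (hl p hp)]

def nodupSignedProds (g : ι → Γ) : Set Γ :=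
  signedProd g '' {l | (l.map Prod.fst).Nodup}

lemma finite_nodupSignedProds [Fintype ι] (g : ι → Γ) : (nodupSignedProds g).Finite := by
  refine ((List.finite_length_le (ι × Bool) (Fintype.card ι)).subset ?_).image _
  intro l hl
  simpa using List.Nodup.length_le_card hl

lemma signedProd_update_ne_one [DecidableEq ι] (g : ι → Γ) {a : ι} {x : Γ}
    (hx : x ∉ nodupSignedProds g * nodupSignedProds g)
    (hx_inv : x⁻¹ ∉ nodupSignedProds g * nodupSignedProds g)
    {l : List (ι × Bool)} (hnd : (l.map Prod.fst).Nodup) (hal : a ∈ l.map Prod.fst) :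
    signedProd (update g a x) l ≠ 1 := by
  intro hprod
  obtain ⟨⟨i, b⟩, hp, hia : i = a⟩ := List.mem_map.mp hal
  subst i
  obtain ⟨l₁, l₂, rfl⟩ := List.append_of_mem hp
  simp only [List.map_append, List.map_cons, List.nodup_append, List.nodup_cons,
    List.mem_cons, List.mem_map] at hnd
  obtain ⟨hnd₁, ⟨hn₂, hnd₂⟩, hdisj⟩ := hnd
  have hne₁ : ∀ q ∈ l₁, q.1 ≠ a := fun q hq => hdisj q.1 ⟨q, hq, rfl⟩ a (Or.inl rfl)
  have hne₂ : ∀ q ∈ l₂, q.1 ≠ a := fun q hq hqa => hn₂ ⟨q, hq, hqa⟩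
  have hA : signedProd g l₁ ∈ nodupSignedProds g := ⟨l₁, hnd₁, rfl⟩
  have hB : signedProd g l₂ ∈ nodupSignedProds g := ⟨l₂, hnd₂, rfl⟩
  rw [signedProd_append, signedProd_cons, update_self, signedProd_update_of_forall_ne g x hne₁,
    signedProd_update_of_forall_ne g x hne₂, ← mul_assoc, mul_eq_one_iff_eq_inv] at hprod
  -- `A * x^(±1) * B = 1` forces `x^(∓1) = B * A`
  cases b <;> simp only [Bool.false_eq_true, ↓reduceIte] at hprod
  · refine hx ⟨_, hB, _, hA, ?_⟩
    rw [← inv_inv (signedProd g l₂), ← hprod]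
    group
  · refine hx_inv ⟨_, hB, _, hA, ?_⟩
    rw [← inv_inv (signedProd g l₂), ← hprod]
    group

lemma SignedDissociatedOn.empty (g : ι → Γ) : SignedDissociatedOn ∅ g := by
  intro l hne _ hmem
  obtain ⟨p, hp⟩ := List.exists_mem_of_ne_nil l hne
  exact (hmem p hp).elim

lemma SignedDissociatedOn.exists_update_insert [Fintype ι] [DecidableEq ι] [Infinite Γ]
    {s : Set ι} {g : ι → Γ} (hg : SignedDissociatedOn s g) (a : ι) :
    ∃ x, SignedDissociatedOn (insert a s) (update g a x) := by
  have hV := finite_nodupSignedProds g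
  obtain ⟨x, hx⟩ := ((hV.mul hV).union (hV.mul hV).inv).exists_notMem
  obtain ⟨hx, hx_inv⟩ := not_or.mp hx
  refine ⟨x, fun l hne hnd hmem => ?_⟩
  by_cases hal : a ∈ l.map Prod.fst
  · exact signedProd_update_ne_one g hx hx_inv hnd hal
  · have hl : ∀ q ∈ l, q.1 ≠ a := fun q hq hqa => hal (List.mem_map.mpr ⟨q, hq, hqa⟩)
    rw [signedProd_update_of_forall_ne g x hl]
    exact hg l hne hnd fun q hq => (hmem q hq).resolve_left (hl q hq)

lemma exists_signedDissociatedOn [Fintype ι] [Infinite Γ] (s : Finset ι) :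
    ∃ g : ι → Γ, SignedDissociatedOn s g := by
  classical
  induction s using Finset.induction_on with
  | empty => exact ⟨1, by simpa using SignedDissociatedOn.empty 1⟩
  | insert a s _ ih =>
    obtain ⟨g, hg⟩ := ih
    obtain ⟨x, hx⟩ := hg.exists_update_insert a
    exact ⟨update g a x, by simpa using hx⟩

end

theorem exists_dissociated_family_general (Γ : Type*) [Group Γ] [Infinite Γ]
    (n : ℕ) :
    ∃ g : Fin n → Γ, ∀ l : List (Fin n × Bool), l ≠ [] →
      (l.map Prod.fst).Nodup →
      (l.map fun p => if p.2 then g p.1 else (g p.1)⁻¹).prod ≠ 1 := by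
  obtain ⟨g, hg⟩ := exists_signedDissociatedOn (Γ := Γ) (Finset.univ : Finset (Fin n))
  exact ⟨g, fun l hne hnd => hg l hne hnd fun p _ => by simp⟩

/-- In every infinite group `Γ`, for every `n ≥ 1` there are
elements `g₁, …, gₙ` such that no product of the `g_i`'s and their inverses,
over a nonempty set of distinct indices taken in any order and with an
arbitrary sign for each factor, equals the identity. -/
theorem exists_dissociated_family (Γ : Type*) [Group Γ] [Infinite Γ]
    (n : ℕ) (hn : 0 < n) :
    ∃ g : Fin n → Γ, ∀ l : List (Fin n × Bool), l ≠ [] →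
      (l.map Prod.fst).Nodup →
      (l.map fun p => if p.2 then g p.1 else (g p.1)⁻¹).prod ≠ 1 :=
  exists_dissociated_family_general Γ n
end

section
/- For n ≥ 3, let 2C_n be the graph obtained from a cycle of length n by doubling every edge, and let B_n consist of two edge-disjoint Hamiltonian cycles of 2C_n. Then for distinct m ≠ n, the biased graph (2C_m, B_m) is not a minor of (2C_n, B_n): deleting or contracting any edge of (2C_n, B_n) yields a biased graph with at most one balanced cycle, and at most one balanced cycle persists under all further minor operations, while (2C_m, B_m) has exactly two balanced cycles. -/
open scoped Classical

/-- A multigraph with a fixed orientation of each edge. -/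
structure Multigraph (V E : Type*) where
  src : E → V
  tgt : E → V

namespace Multigraph

variable {V E : Type*}

/-- A step of a walk: an edge together with a direction (`true` = forward). -/
abbrev Step (E : Type*) := E × Bool

def stepSrc (G : Multigraph V E) (s : Step E) : V :=
  if s.2 then G.src s.1 else G.tgt s.1

def stepTgt (G : Multigraph V E) (s : Step E) : V :=
  if s.2 then G.tgt s.1 else G.src s.1

/-- A walk: consecutive steps match up. -/
def IsWalk (G : Multigraph V E) (W : List (Step E)) : Prop :=
  W.Chain' fun s t => G.stepTgt s = G.stepSrc t

def IsClosedWalk (G : Multigraph V E) (W : List (Step E)) : Prop :=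
  W ≠ [] ∧ G.IsWalk W ∧ W.getLast?.map G.stepTgt = W.head?.map G.stepSrc

/-- A simple closed walk, i.e. a walk once around a cycle: no repeated
edges and no repeated vertices. -/
def IsCycleWalk (G : Multigraph V E) (W : List (Step E)) : Prop :=
  G.IsClosedWalk W ∧ (W.map Prod.fst).Nodup ∧ (W.map G.stepSrc).Nodup

def edgesOf [DecidableEq E] (W : List (Step E)) : Finset E :=
  (W.map Prod.fst).toFinset

/-- A cycle, identified with its edge set. -/
def IsCycle (G : Multigraph V E) [DecidableEq E] (C : Finset E) : Prop :=
  ∃ W, G.IsCycleWalk W ∧ edgesOf W = C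

/-- A path from `x` to `y`: a walk with no repeated vertices. -/
def IsPath (G : Multigraph V E) (x y : V) (P : List (Step E)) : Prop :=
  P ≠ [] ∧ G.IsWalk P ∧ P.head?.map G.stepSrc = some x ∧
    P.getLast?.map G.stepTgt = some y ∧ (P.map G.stepSrc ++ [y]).Nodup

/-- A theta subgraph: two distinct vertices `x, y` joined by three internally
disjoint paths. -/
def IsTheta (G : Multigraph V E) (x y : V) (P₁ P₂ P₃ : List (Step E)) : Prop :=
  x ≠ y ∧ G.IsPath x y P₁ ∧ G.IsPath x y P₂ ∧ G.IsPath x y P₃ ∧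
    ((P₁.map G.stepSrc).tail).Disjoint ((P₂.map G.stepSrc).tail) ∧
    ((P₁.map G.stepSrc).tail).Disjoint ((P₃.map G.stepSrc).tail) ∧
    ((P₂.map G.stepSrc).tail).Disjoint ((P₃.map G.stepSrc).tail) ∧
    (P₁.map Prod.fst).Disjoint (P₂.map Prod.fst) ∧
    (P₁.map Prod.fst).Disjoint (P₃.map Prod.fst) ∧
    (P₂.map Prod.fst).Disjoint (P₃.map Prod.fst)

/-- The theta property for a collection `B` of (edge sets of) cycles:
no theta subgraph contains exactly two members of `B`. -/
def ThetaProperty (G : Multigraph V E) [DecidableEq E] (B : Set (Finset E)) : Prop :=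
  ∀ x y P₁ P₂ P₃, G.IsTheta x y P₁ P₂ P₃ →
    ¬ ((edgesOf (P₁ ++ P₂) ∈ B ∧ edgesOf (P₁ ++ P₃) ∈ B ∧ edgesOf (P₂ ++ P₃) ∉ B) ∨
       (edgesOf (P₁ ++ P₂) ∈ B ∧ edgesOf (P₂ ++ P₃) ∈ B ∧ edgesOf (P₁ ++ P₃) ∉ B) ∨
       (edgesOf (P₁ ++ P₃) ∈ B ∧ edgesOf (P₂ ++ P₃) ∈ B ∧ edgesOf (P₁ ++ P₂) ∉ B))

/-- The label of a walk in a group-labelled graph. -/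
def wlabel {Γ : Type*} [Group Γ] (φ : E → Γ) (W : List (Step E)) : Γ :=
  (W.map fun s => if s.2 then φ s.1 else (φ s.1)⁻¹).prod

/-- The balanced cycles of a group labelling: cycles some (hence every) simple
closed walk around which has label `1`. -/
def BalancedCycles (G : Multigraph V E) [DecidableEq E] {Γ : Type*} [Group Γ]
    (φ : E → Γ) : Set (Finset E) :=
  {C | ∃ W, G.IsCycleWalk W ∧ edgesOf W = C ∧ wlabel φ W = 1}

/-- Reversal of a walk. -/
def revWalk (W : List (Step E)) : List (Step E) :=
  (W.map fun s => (s.1, !s.2)).reverse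

/-- Deletion of an edge. -/
def delete (G : Multigraph V E) (e : E) : Multigraph V {f : E // f ≠ e} where
  src f := G.src f.1
  tgt f := G.tgt f.1

/-- Contraction of a (non-loop) edge: the head of `e` is identified with its tail. -/
noncomputable def contract (G : Multigraph V E) (e : E) :
    Multigraph V {f : E // f ≠ e} where
  src f := if G.src f.1 = G.tgt e then G.src e else G.src f.1
  tgt f := if G.tgt f.1 = G.tgt e then G.src e else G.tgt f.1

/-- The biased graph obtained by deleting `e`: balanced cycles are the
balanced cycles avoiding `e`. -/
def deleteBias (G : Multigraph V E) [DecidableEq E] (B : Set (Finset E)) (e : E) :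
    Set (Finset {f : E // f ≠ e}) :=
  {C | (G.delete e).IsCycle C ∧ C.image Subtype.val ∈ B}

/-- The biased graph obtained by contracting `e`: a cycle `C` of `G/e` is
balanced iff `C ∈ B` or `E(C) ∪ {e}` is the edge set of a cycle of `B`. -/
noncomputable def contractBias (G : Multigraph V E) [DecidableEq E]
    (B : Set (Finset E)) (e : E) : Set (Finset {f : E // f ≠ e}) :=
  {C | (G.contract e).IsCycle C ∧
    (C.image Subtype.val ∈ B ∨ insert e (C.image Subtype.val) ∈ B)}

/-- `Γ`-labellability of a biased graph (with respect to the fixed orientation). -/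
def GLabellable (G : Multigraph V E) [DecidableEq E] (Γ : Type*) [Group Γ]
    (B : Set (Finset E)) : Prop :=
  ∃ φ : E → Γ, B = G.BalancedCycles φ

end Multigraph

/-- A bundled biased graph. -/
structure BiasedGraph where
  V : Type
  E : Type
  G : Multigraph V E
  B : Set (Finset E)

namespace BiasedGraph

/-- Deletion of an edge in a biased graph. -/
noncomputable def del (X : BiasedGraph) (e : X.E) : BiasedGraph := by
  classical
  exact { V := X.V, E := {f : X.E // f ≠ e}, G := X.G.delete e,
          B := X.G.deleteBias X.B e }

/-- Contraction of an edge in a biased graph. -/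
noncomputable def con (X : BiasedGraph) (e : X.E) : BiasedGraph := by
  classical
  exact { V := X.V, E := {f : X.E // f ≠ e}, G := X.G.contract e,
          B := X.G.contractBias X.B e }

/-- A single minor operation: deletion of any edge (which also covers
contraction of a balanced loop), or contraction of a non-loop edge. -/
inductive MinorStep : BiasedGraph → BiasedGraph → Prop
  | del (X : BiasedGraph) (e : X.E) : MinorStep (X.del e) X
  | con (X : BiasedGraph) (e : X.E) (he : X.G.src e ≠ X.G.tgt e) :
      MinorStep (X.con e) X

/-- Isomorphism of biased graphs: bijections of vertices and edges preserving
(unordered) incidence and the balanced cycles. -/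
def Iso (X Y : BiasedGraph) : Prop := by
  classical
  exact ∃ (α : X.V ≃ Y.V) (β : X.E ≃ Y.E),
    (∀ e, ({Y.G.src (β e), Y.G.tgt (β e)} : Set Y.V) =
      {α (X.G.src e), α (X.G.tgt e)}) ∧
    ∀ C : Finset X.E, C ∈ X.B ↔ C.image β ∈ Y.B

/-- The minor order on biased graphs: `X` is a minor of `Y` if `X` is
isomorphic to a biased graph obtained from `Y` by a sequence of deletions and
contractions. -/
def IsMinor (X Y : BiasedGraph) : Prop :=
  ∃ Z : BiasedGraph, Relation.ReflTransGen MinorStep Z Y ∧ X.Iso Z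

end BiasedGraph

/-- The biased graph `(2Cₙ, 𝓑ₙ)`: the cycle of length `n` with every edge
doubled, where the balanced cycles are the two edge-disjoint Hamiltonian
cycles (the `false` copies and the `true` copies of the edges). -/
def twoC (n : ℕ) (hn : 3 ≤ n) : BiasedGraph := by
  classical
  haveI : NeZero n := ⟨by omega⟩
  exact
    { V := Fin n, E := Fin n × Bool,
      G := { src := fun p => p.1, tgt := fun p => p.1 + 1 },
      B := { Finset.univ.image (fun i : Fin n => (i, false)),
             Finset.univ.image (fun i : Fin n => (i, true)) } }

/-!
A single deletion or contraction of an edge `e` of `(2Cₙ, 𝓑ₙ)` leaves at most one balanced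
cycle. Deleting `e` destroys the Hamiltonian cycle through `e`. After contracting `e`, a cycle
avoiding `e` would still need all `n` vertices, but only `n - 1` are left, so every balanced
cycle comes from the Hamiltonian cycle through `e`. Having at most one balanced cycle is
preserved by all further minor operations and by isomorphism, whereas `(2Cₘ, 𝓑ₘ)` has two.
The remaining case, where no operation is applied, is ruled out by counting vertices.
-/

namespace Multigraph

variable {V E : Type*} {e : E}

theorem stepSrc_contract_ne (G : Multigraph V E) (he : G.src e ≠ G.tgt e)
    (s : Step {f : E // f ≠ e}) : (G.contract e).stepSrc s ≠ G.tgt e := by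
  simp only [stepSrc, contract]
  split_ifs <;> assumption

variable [DecidableEq E]

theorem notMem_image_val (C : Finset {f : E // f ≠ e}) : e ∉ C.image Subtype.val := by
  simp

theorem insert_image_val_injective :
    Function.Injective fun C : Finset {f : E // f ≠ e} => insert e (C.image Subtype.val) := by
  intro C D h
  apply Finset.image_injective Subtype.val_injective
  simpa only [Finset.erase_insert (notMem_image_val _)] using congrArg (Finset.erase · e) h

theorem card_lt_of_isCycle_contract [Fintype V] {G : Multigraph V E}
    (he : G.src e ≠ G.tgt e) {C : Finset {f : E // f ≠ e}} (hC : (G.contract e).IsCycle C) :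
    C.card < Fintype.card V := by
  obtain ⟨W, ⟨-, hedges, hverts⟩, rfl⟩ := hC
  calc (edgesOf W).card = W.length := by
        rw [edgesOf, List.toFinset_card_of_nodup hedges, List.length_map]
    _ = (W.map (G.contract e).stepSrc).toFinset.card := by
        rw [List.toFinset_card_of_nodup hverts, List.length_map]
    _ < Fintype.card V := Finset.card_lt_univ_of_notMem (x := G.tgt e) <| by
        simp only [List.mem_toFinset, List.mem_map, not_exists, not_and]
        exact fun s _ => G.stepSrc_contract_ne he s

theorem deleteBias_subsingleton (G : Multigraph V E) {B : Set (Finset E)}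
    (hB : ∀ X ∈ B, ∀ Y ∈ B, e ∉ X → e ∉ Y → X = Y) :
    (G.deleteBias B e).Subsingleton :=
  fun _ hC _ hD => Finset.image_injective Subtype.val_injective <|
    hB _ hC.2 _ hD.2 (notMem_image_val _) (notMem_image_val _)

theorem contractBias_subsingleton (G : Multigraph V E) {B : Set (Finset E)}
    (hB : ∀ X ∈ B, ∀ Y ∈ B, e ∈ X → e ∈ Y → X = Y)
    (hcycle : ∀ C, (G.contract e).IsCycle C → C.image Subtype.val ∉ B) :
    (G.contractBias B e).Subsingleton := by
  rintro C ⟨hC, hCB⟩ D ⟨hD, hDB⟩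
  have hCB := hCB.resolve_left (hcycle C hC)
  have hDB := hDB.resolve_left (hcycle D hD)
  exact insert_image_val_injective <|
    hB _ hCB _ hDB (Finset.mem_insert_self _ _) (Finset.mem_insert_self _ _)

theorem contractBias_subsingleton_of_subsingleton (G : Multigraph V E) {B : Set (Finset E)}
    (hB : B.Subsingleton) : (G.contractBias B e).Subsingleton := by
  rintro C ⟨-, hCB⟩ D ⟨-, hDB⟩
  rcases hCB with hCB | hCB <;> rcases hDB with hDB | hDB
  · exact Finset.image_injective Subtype.val_injective (hB hCB hDB)
  · exact absurd (hB hDB hCB ▸ Finset.mem_insert_self _ _) (notMem_image_val C)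
  · exact absurd (hB hCB hDB ▸ Finset.mem_insert_self _ _) (notMem_image_val D)
  · exact insert_image_val_injective (hB hCB hDB)

end Multigraph

namespace BiasedGraph

theorem MinorStep.B_subsingleton {X Y : BiasedGraph} (h : MinorStep X Y)
    (hY : Y.B.Subsingleton) : X.B.Subsingleton := by
  cases h with
  | del Y e => exact Y.G.deleteBias_subsingleton fun _ hX _ hX' _ _ => hY hX hX'
  | con Y e _ => exact Y.G.contractBias_subsingleton_of_subsingleton hY

theorem B_subsingleton_of_reflTransGen {X Y : BiasedGraph}
    (h : Relation.ReflTransGen MinorStep X Y) (hY : Y.B.Subsingleton) : X.B.Subsingleton := by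
  induction h with
  | refl => exact hY
  | tail _ hstep ih => exact ih (hstep.B_subsingleton hY)

theorem Iso.B_subsingleton {X Y : BiasedGraph} (h : X.Iso Y) (hY : Y.B.Subsingleton) :
    X.B.Subsingleton := by
  obtain ⟨-, β, -, hB⟩ := h
  exact fun C hC D hD => Finset.image_injective β.injective (hY ((hB C).1 hC) ((hB D).1 hD))

theorem Iso.nonempty_equiv_V {X Y : BiasedGraph} (h : X.Iso Y) : Nonempty (X.V ≃ Y.V) := by
  obtain ⟨α, -⟩ := h
  exact ⟨α⟩

end BiasedGraph

namespace twoC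

variable {n : ℕ} {hn : 3 ≤ n}

theorem mem_B {X : Finset (Fin n × Bool)} :
    X ∈ (twoC n hn).B ↔ ∃ c, X = Finset.univ.image fun i : Fin n => (i, c) := by
  change X = _ ∨ X = _ ↔ _
  constructor
  · rintro (rfl | rfl) <;> exact ⟨_, rfl⟩
  · rintro ⟨_ | _, rfl⟩ <;> simp

theorem mem_image_pair_iff (e : Fin n × Bool) (c : Bool) :
    e ∈ (Finset.univ.image fun i : Fin n => (i, c)) ↔ e.2 = c := by
  obtain ⟨i, d⟩ := e
  simp [eq_comm]

theorem eq_of_mem_B_of_mem {X Y : Finset (Fin n × Bool)} (hX : X ∈ (twoC n hn).B)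
    (hY : Y ∈ (twoC n hn).B) {e : Fin n × Bool} (heX : e ∈ X) (heY : e ∈ Y) : X = Y := by
  obtain ⟨c, rfl⟩ := mem_B.1 hX
  obtain ⟨d, rfl⟩ := mem_B.1 hY
  rw [mem_image_pair_iff] at heX heY
  rw [← heX, ← heY]

theorem eq_of_mem_B_of_notMem {X Y : Finset (Fin n × Bool)} (hX : X ∈ (twoC n hn).B)
    (hY : Y ∈ (twoC n hn).B) {e : Fin n × Bool} (heX : e ∉ X) (heY : e ∉ Y) : X = Y := by
  obtain ⟨c, rfl⟩ := mem_B.1 hX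
  obtain ⟨d, rfl⟩ := mem_B.1 hY
  rw [mem_image_pair_iff] at heX heY
  rw [Bool.eq_not_of_ne (Ne.symm heX), Bool.eq_not_of_ne (Ne.symm heY)]

theorem card_of_mem_B {X : Finset (Fin n × Bool)} (hX : X ∈ (twoC n hn).B) : X.card = n := by
  obtain ⟨c, rfl⟩ := mem_B.1 hX
  rw [Finset.card_image_of_injective _ fun _ _ h => congrArg Prod.fst h]
  simp

theorem not_B_subsingleton (n : ℕ) (hn : 3 ≤ n) : ¬ (twoC n hn).B.Subsingleton := by
  have : NeZero n := ⟨by omega⟩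
  intro h
  have hmem := (mem_image_pair_iff ((0 : Fin n), false) false).2 rfl
  rw [h (mem_B.2 ⟨false, rfl⟩) (mem_B.2 ⟨true, rfl⟩), mem_image_pair_iff] at hmem
  exact Bool.false_ne_true hmem

theorem src_ne_tgt (e : (twoC n hn).E) : (twoC n hn).G.src e ≠ (twoC n hn).G.tgt e := by
  have : NeZero n := ⟨by omega⟩
  show e.1 ≠ e.1 + 1
  exact left_ne_add.mpr (by rw [Ne, Fin.one_eq_zero_iff]; omega)

theorem del_B_subsingleton (e : (twoC n hn).E) : ((twoC n hn).del e).B.Subsingleton :=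
  Multigraph.deleteBias_subsingleton _ fun _ hX _ hY => eq_of_mem_B_of_notMem hX hY

theorem con_B_subsingleton (e : (twoC n hn).E) : ((twoC n hn).con e).B.Subsingleton := by
  refine Multigraph.contractBias_subsingleton _ (fun _ hX _ hY => eq_of_mem_B_of_mem hX hY) ?_
  intro C hC hCB
  have hlt := (Finset.card_image_le (s := C) (f := Subtype.val)).trans_lt
    (Multigraph.card_lt_of_isCycle_contract (V := Fin n) (src_ne_tgt e) hC)
  rw [Fintype.card_fin] at hlt
  exact hlt.ne (card_of_mem_B hCB)

end twoC

/-- For distinct `m ≠ n` (both at least 3), the biased graph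
`(2C_m, 𝓑_m)` is not a minor of `(2C_n, 𝓑_n)`. -/
theorem twoC_not_minor (m n : ℕ) (hm : 3 ≤ m) (hn : 3 ≤ n) (hmn : m ≠ n) :
    ¬ (twoC m hm).IsMinor (twoC n hn) := by
  rintro ⟨Z, hchain, hiso⟩
  rcases hchain.cases_tail with rfl | ⟨Y, hZY, hstep⟩
  · exact hmn (Fin.equiv_iff_eq.1 hiso.nonempty_equiv_V)
  · have hY : Y.B.Subsingleton := by
      cases hstep with
      | del _ e => exact twoC.del_B_subsingleton e
      | con _ e _ => exact twoC.con_B_subsingleton e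
    exact twoC.not_B_subsingleton m hm
      (hiso.B_subsingleton (BiasedGraph.B_subsingleton_of_reflTransGen hZY hY))
end

section
/- Let (G, B) be a biased graph and K the 2-complex obtained from G by attaching a disc along each cycle of B. If (G, B) is group labellable (B = B_φ for some group labelling φ), then every cycle C ∉ B is a non-contractible closed curve in K; equivalently, there is no sequence of closed walks W_1, ..., W_n in G such that each W_{i+1} is obtained from W_i by rerouting along a balanced cycle, W_1 is a simple closed walk around an unbalanced cycle, and W_n is a simple closed walk around a balanced cycle. -/
open scoped Classical

/-- Rerouting a closed walk along a balanced cycle: the subwalk `P`, a path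
from `u` to `v` lying on a cycle of `B` (whose other `u`–`v` path is `Q`), is
replaced by `Q`. -/
def Multigraph.Reroute {V E : Type*} [DecidableEq E] (G : Multigraph V E)
    (B : Set (Finset E)) (W W' : List (Multigraph.Step E)) : Prop :=
  ∃ (A S P Q : List (Multigraph.Step E)) (u v : V),
    W = A ++ P ++ S ∧ W' = A ++ Q ++ S ∧
    G.IsClosedWalk W ∧ G.IsClosedWalk W' ∧
    G.IsPath u v P ∧
    G.IsCycleWalk (P ++ Multigraph.revWalk Q) ∧
    Multigraph.edgesOf (P ++ Multigraph.revWalk Q) ∈ B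

/-! Rerouting along a balanced cycle `P ++ revWalk Q` replaces `P` by a path `Q` with the same
label, so the label of a closed walk is invariant along a rerouting sequence. The one subtle
point is that balance of a cycle is witnessed by *some* simple closed walk around it; but such
a walk is determined by its edge set up to rotation and reversal, neither of which changes
whether its label is trivial. -/

theorem List.isChain_iff_dropLast_map_eq_tail {α β : Type*} (f g : α → β) (l : List α) :
    l.IsChain (fun a b => f a = g b) ↔ (l.map f).dropLast = (l.map g).tail := by
  induction l with
  | nil => simp
  | cons a l ih =>
    cases l with
    | nil => simp
    | cons b l => simp [List.isChain_cons_cons, ih]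

theorem List.eq_rotate_one_iff {α : Type*} {l m : List α} (hl : l ≠ [])
    (hlen : m.length = l.length) :
    m = l.rotate 1 ↔ m.dropLast = l.tail ∧ m.getLast? = l.head? := by
  obtain ⟨a, t, rfl⟩ := List.exists_cons_of_ne_nil hl
  induction m using List.reverseRecOn with
  | nil => simp at hlen
  | append_singleton m b => simp [and_comm]

theorem List.rotate_one_reverse_rotate_one {α : Type*} (l : List α) :
    (l.rotate 1).reverse.rotate 1 = l.reverse := by
  cases l <;> simp [List.rotate_cons_succ]

namespace Multigraph

variable {V E : Type*} {G : Multigraph V E}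

lemma Step.eq_or_eq_flip_of_fst_eq {s t : Step E} (h : s.1 = t.1) :
    s = t ∨ s = (t.1, !t.2) := by
  rcases s with ⟨e, _ | _⟩ <;> rcases t with ⟨f, _ | _⟩ <;> simp_all

@[simp] lemma stepSrc_flip (s : Step E) : G.stepSrc (s.1, !s.2) = G.stepTgt s := by
  rcases s with ⟨e, _ | _⟩ <;> rfl

@[simp] lemma stepTgt_flip (s : Step E) : G.stepTgt (s.1, !s.2) = G.stepSrc s := by
  rcases s with ⟨e, _ | _⟩ <;> rfl

lemma isWalk_iff {W : List (Step E)} :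
    G.IsWalk W ↔ (W.map G.stepTgt).dropLast = (W.map G.stepSrc).tail :=
  List.isChain_iff_dropLast_map_eq_tail _ _ _

lemma isClosedWalk_iff {W : List (Step E)} :
    G.IsClosedWalk W ↔ W ≠ [] ∧ W.map G.stepTgt = (W.map G.stepSrc).rotate 1 := by
  rw [IsClosedWalk, isWalk_iff, ← List.getLast?_map, ← List.head?_map]
  refine and_congr_right fun hW => ?_
  rw [List.eq_rotate_one_iff (by simpa) (by simp)]

lemma map_fst_revWalk (W : List (Step E)) :
    (revWalk W).map Prod.fst = (W.map Prod.fst).reverse := by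
  simp [revWalk, Function.comp_def]

lemma map_stepSrc_revWalk (W : List (Step E)) :
    (revWalk W).map G.stepSrc = (W.map G.stepTgt).reverse := by
  simp [revWalk, Function.comp_def]

lemma map_stepTgt_revWalk (W : List (Step E)) :
    (revWalk W).map G.stepTgt = (W.map G.stepSrc).reverse := by
  simp [revWalk, Function.comp_def]

lemma flip_mem_revWalk {W : List (Step E)} {s : Step E} (hs : s ∈ W) :
    (s.1, !s.2) ∈ revWalk W := by
  rw [revWalk, List.mem_reverse]
  exact List.mem_map_of_mem hs

section edgesOf

variable [DecidableEq E]

lemma edgesOf_revWalk (W : List (Step E)) : edgesOf (revWalk W) = edgesOf W := by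
  simp [edgesOf, map_fst_revWalk]

lemma edgesOf_append_comm (A B : List (Step E)) : edgesOf (A ++ B) = edgesOf (B ++ A) := by
  simp [edgesOf, Finset.union_comm]

end edgesOf

namespace IsCycleWalk

variable {W X : List (Step E)}

lemma ne_nil (hW : G.IsCycleWalk W) : W ≠ [] := hW.1.1

lemma nodup (hW : G.IsCycleWalk W) : W.Nodup := hW.2.1.of_map _

lemma map_stepTgt_eq (hW : G.IsCycleWalk W) :
    W.map G.stepTgt = (W.map G.stepSrc).rotate 1 :=
  (isClosedWalk_iff.1 hW.1).2

lemma nodup_map_stepTgt (hW : G.IsCycleWalk W) : (W.map G.stepTgt).Nodup := by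
  rw [hW.map_stepTgt_eq]
  exact List.nodup_rotate.2 hW.2.2

lemma rotate (hW : G.IsCycleWalk W) (k : ℕ) : G.IsCycleWalk (W.rotate k) := by
  refine ⟨isClosedWalk_iff.2 ⟨by simpa using hW.ne_nil, ?_⟩, ?_, ?_⟩
  · simp only [List.map_rotate, hW.map_stepTgt_eq, List.rotate_rotate, add_comm]
  · simpa using (List.nodup_rotate (n := k)).2 hW.2.1
  · simpa using (List.nodup_rotate (n := k)).2 hW.2.2

lemma append_comm {A B : List (Step E)} (h : G.IsCycleWalk (A ++ B)) :
    G.IsCycleWalk (B ++ A) := by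
  simpa [List.rotate_append_length_eq] using h.rotate A.length

lemma revWalk (hW : G.IsCycleWalk W) : G.IsCycleWalk (revWalk W) := by
  refine ⟨isClosedWalk_iff.2 ⟨by simpa [Multigraph.revWalk] using hW.ne_nil, ?_⟩, ?_, ?_⟩
  · rw [map_stepTgt_revWalk, map_stepSrc_revWalk, hW.map_stepTgt_eq,
      List.rotate_one_reverse_rotate_one]
  · simpa [map_fst_revWalk] using hW.2.1
  · simpa [map_stepSrc_revWalk] using hW.nodup_map_stepTgt

lemma stepSrc_getElem_succ (hW : G.IsCycleWalk W) {k : ℕ} (hk : k + 1 < W.length) :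
    G.stepSrc W[k + 1] = G.stepTgt W[k] :=
  (List.isChain_iff_getElem.1 hW.1.2.1 k hk).symm

variable [DecidableEq E]

lemma card_edgesOf (hW : G.IsCycleWalk W) : (edgesOf W).card = W.length := by
  rw [edgesOf, List.toFinset_card_of_nodup hW.2.1, List.length_map]

lemma exists_mem_fst_eq (hE : edgesOf W = edgesOf X) {x : Step E} (hx : x ∈ X) :
    ∃ y ∈ W, y.1 = x.1 := by
  have : x.1 ∈ edgesOf W := by
    rw [hE, edgesOf, List.mem_toFinset]
    exact List.mem_map_of_mem hx
  simpa [edgesOf] using this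

/-- In two cycle walks with the same edges, a common step is followed by a common step:
the next step of `X` cannot use the next edge of `W` backwards, since it would then end
where the common step ends. -/
lemma getElem_succ_eq (hW : G.IsCycleWalk W) (hX : G.IsCycleWalk X)
    (hE : edgesOf W = edgesOf X) {k : ℕ} (hkW : k + 1 < W.length) (hkX : k + 1 < X.length)
    (h : W[k] = X[k]) : W[k + 1] = X[k + 1] := by
  have hsrc : G.stepSrc X[k + 1] = G.stepSrc W[k + 1] := by
    rw [hX.stepSrc_getElem_succ, hW.stepSrc_getElem_succ, h]
  obtain ⟨y, hyW, hy⟩ := exists_mem_fst_eq hE (List.getElem_mem hkX)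
  rcases Step.eq_or_eq_flip_of_fst_eq hy with rfl | rfl
  · exact List.inj_on_of_nodup_map hW.2.2 (List.getElem_mem _) hyW hsrc.symm
  · exfalso
    have hyk : (X[k + 1].1, !X[k + 1].2) = W[k] := by
      refine List.inj_on_of_nodup_map hW.nodup_map_stepTgt hyW (List.getElem_mem _) ?_
      rw [stepTgt_flip, hX.stepSrc_getElem_succ, h]
    have hfst : X[k + 1].1 = X[k].1 := by rw [← h, ← hyk]
    have := List.inj_on_of_nodup_map hX.2.1 (List.getElem_mem _) (List.getElem_mem _) hfst
    have := hX.nodup.getElem_inj_iff.1 this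
    omega

lemma eq_of_edgesOf_eq_of_head?_eq (hW : G.IsCycleWalk W) (hX : G.IsCycleWalk X)
    (hE : edgesOf W = edgesOf X) (hh : W.head? = X.head?) : W = X := by
  have hlen : W.length = X.length := by rw [← hW.card_edgesOf, ← hX.card_edgesOf, hE]
  refine List.ext_getElem hlen fun k hkW hkX => ?_
  induction k with
  | zero => simpa [List.head?_eq_getElem?, hkW, hkX] using hh
  | succ k ih => exact getElem_succ_eq hW hX hE hkW hkX (ih (by omega) (by omega))

end IsCycleWalk

section Labels

variable {Γ : Type*} [Group Γ] (φ : E → Γ)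

lemma wlabel_append (A B : List (Step E)) :
    wlabel φ (A ++ B) = wlabel φ A * wlabel φ B := by
  simp [wlabel]

lemma wlabel_revWalk (W : List (Step E)) : wlabel φ (revWalk W) = (wlabel φ W)⁻¹ := by
  induction W with
  | nil => simp [wlabel, revWalk]
  | cons s W ih =>
    rw [show revWalk (s :: W) = revWalk W ++ [(s.1, !s.2)] by simp [revWalk],
      wlabel_append, ih, show s :: W = [s] ++ W from rfl, wlabel_append, mul_inv_rev]
    rcases s with ⟨e, _ | _⟩ <;> simp [wlabel]

variable [DecidableEq E] {W X : List (Step E)}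

lemma IsCycleWalk.wlabel_eq_one_iff_of_head?_mem (hW : G.IsCycleWalk W)
    (hX : G.IsCycleWalk X) (hE : edgesOf W = edgesOf X) {x : Step E} (hx : X.head? = some x)
    (hxW : x ∈ W) : wlabel φ W = 1 ↔ wlabel φ X = 1 := by
  obtain ⟨A, B, rfl⟩ := List.append_of_mem hxW
  have hrot : x :: B ++ A = X := hW.append_comm.eq_of_edgesOf_eq_of_head?_eq hX
    (by rw [← edgesOf_append_comm, hE]) (by simp [hx])
  rw [← hrot, wlabel_append, wlabel_append, mul_eq_one_comm]

lemma IsCycleWalk.wlabel_eq_one_iff (hW : G.IsCycleWalk W) (hX : G.IsCycleWalk X)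
    (hE : edgesOf W = edgesOf X) : wlabel φ W = 1 ↔ wlabel φ X = 1 := by
  obtain ⟨x, _, rfl⟩ := List.exists_cons_of_ne_nil hX.ne_nil
  obtain ⟨y, hyW, hy⟩ := IsCycleWalk.exists_mem_fst_eq hE List.mem_cons_self
  rcases Step.eq_or_eq_flip_of_fst_eq hy with rfl | rfl
  · exact hW.wlabel_eq_one_iff_of_head?_mem φ hX hE rfl hyW
  · rw [← inv_eq_one, ← wlabel_revWalk]
    exact hW.revWalk.wlabel_eq_one_iff_of_head?_mem φ hX (by rw [edgesOf_revWalk, hE])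
      rfl (by simpa using flip_mem_revWalk hyW)

lemma IsCycleWalk.edgesOf_mem_balancedCycles_iff (hW : G.IsCycleWalk W) :
    edgesOf W ∈ G.BalancedCycles φ ↔ wlabel φ W = 1 :=
  ⟨fun ⟨_, hX, hE, hX1⟩ => (hX.wlabel_eq_one_iff φ hW hE).1 hX1, fun h => ⟨W, hW, rfl, h⟩⟩

lemma Reroute.wlabel_eq (h : G.Reroute (G.BalancedCycles φ) W X) : wlabel φ W = wlabel φ X := by
  obtain ⟨A, S, P, Q, -, -, rfl, rfl, -, -, -, hC, hB⟩ := h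
  rw [hC.edgesOf_mem_balancedCycles_iff, wlabel_append, wlabel_revWalk, mul_inv_eq_one] at hB
  simp only [wlabel_append, hB]

lemma wlabel_eq_of_reflTransGen_reroute
    (h : Relation.ReflTransGen (G.Reroute (G.BalancedCycles φ)) W X) :
    wlabel φ W = wlabel φ X := by
  induction h with
  | refl => rfl
  | tail _ hr ih => exact ih.trans (hr.wlabel_eq φ)

end Labels

end Multigraph

/-- If `(G, B)` is group labellable, then there is no sequence
of closed walks `W₁, …, Wₙ` such that each `W_{i+1}` is obtained from `W_i` by
rerouting along a balanced cycle, `W₁` is a simple closed walk around an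
unbalanced cycle, and `Wₙ` is a simple closed walk around a balanced cycle. -/
theorem groupLabellable_no_reroute_sequence {V E : Type*} [DecidableEq E]
    (G : Multigraph V E) (B : Set (Finset E))
    (h : ∃ (Γ : Type) (inst : Group Γ) (φ : E → Γ),
      B = @Multigraph.BalancedCycles V E G _ Γ inst φ) :
    ¬ ∃ (Ws : List (List (Multigraph.Step E)))
        (W₁ Wn : List (Multigraph.Step E)),
        Ws.head? = some W₁ ∧ Ws.getLast? = some Wn ∧
        Ws.Chain' (G.Reroute B) ∧
        G.IsCycleWalk W₁ ∧ Multigraph.edgesOf W₁ ∉ B ∧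
        G.IsCycleWalk Wn ∧ Multigraph.edgesOf Wn ∈ B := by
  obtain ⟨Γ, _, φ, rfl⟩ := h
  rintro ⟨Ws, W₁, Wn, hhead, hlast, hchain, hW₁, hunbal, hWn, hbal⟩
  have hne : Ws ≠ [] := by rintro rfl; simp at hhead
  have hpath := List.relationReflTransGen_of_exists_isChain Ws hchain hne
  rw [(List.head_eq_iff_head?_eq_some hne).2 hhead,
    (List.getLast_eq_iff_getLast?_eq_some hne).2 hlast] at hpath
  rw [hW₁.edgesOf_mem_balancedCycles_iff, Multigraph.wlabel_eq_of_reflTransGen_reroute φ hpath] at hunbal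
  exact hunbal ((hWn.edgesOf_mem_balancedCycles_iff φ).1 hbal)
end

section
/- Let (G, B) be a loopless biased graph on n ≥ 3 vertices in which every pair of distinct vertices is joined by at least four edges and every cycle of length two is unbalanced. If (G', B') is a loopless biased graph on the same edge set with the same parallel classes as G such that three edges form a triangle in G' if and only if they form a triangle in G, then G' is obtained from G by renaming vertices (the map sending each edge to its pair of endpoints in G' equals, up to a bijection of vertex sets, the corresponding map for G). -/
open scoped Classical

/-- The unordered pair of endpoints of an edge. -/
def Multigraph.ends {V E : Type*} (G : Multigraph V E) (e : E) : Set V :=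
  {G.src e, G.tgt e}

/-- Three edges forming a triangle: pairwise adjacent with three distinct
endpoints. -/
def Multigraph.IsTriangle {V E : Type*} (G : Multigraph V E) (e f g : E) : Prop :=
  ∃ x y z : V, x ≠ y ∧ y ≠ z ∧ x ≠ z ∧
    G.ends e = {x, y} ∧ G.ends f = {y, z} ∧ G.ends g = {x, z}

lemma pair_eq_of_mem' {α : Type*} {a b c d : α} (hab : a ≠ b)
    (ha : a = c ∨ a = d) (hb : b = c ∨ b = d) : ({c, d} : Set α) = {a, b} := by
  rcases ha with rfl | rfl <;> rcases hb with rfl | rfl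
  · exact absurd rfl hab
  · rfl
  · exact Set.pair_comm b a
  · exact absurd rfl hab

/-- Let `(G, B)` be a loopless biased graph on `n ≥ 3` vertices
in which every pair of distinct vertices is joined by at least four edges and
every cycle of length two is unbalanced.  If `G'` is a loopless multigraph on
the same edge set with the same parallel classes as `G` and with exactly the
same triples of edges forming triangles, then `G'` is obtained from `G` by
renaming the vertices. -/
theorem frame_unique_renaming {V V' E : Type*} [Fintype V] [DecidableEq E]
    (G : Multigraph V E) (G' : Multigraph V' E) (B : Set (Finset E))
    (hn : 3 ≤ Fintype.card V)
    (hloopless : ∀ e, G.src e ≠ G.tgt e)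
    (hfour : ∀ u v : V, u ≠ v →
      4 ≤ Nat.card {e : E // G.ends e = ({u, v} : Set V)})
    (htwo : ∀ C : Finset E, G.IsCycle C → C.card = 2 → C ∉ B)
    (hloopless' : ∀ e, G'.src e ≠ G'.tgt e)
    (hparallel : ∀ e f : E, G.ends e = G.ends f ↔ G'.ends e = G'.ends f)
    (htriangle : ∀ e f g : E, G.IsTriangle e f g ↔ G'.IsTriangle e f g) :
    ∃ σ : V → V', Function.Injective σ ∧
      ∀ e, G'.ends e = {σ (G.src e), σ (G.tgt e)} := by
  classical
  have hmem' : ∀ (e : E) (a : V'), a ∈ G'.ends e ↔ a = G'.src e ∨ a = G'.tgt e := by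
    intro e a; simp [Multigraph.ends]
  have hmemG : ∀ (e : E) (a : V), a ∈ G.ends e ↔ a = G.src e ∨ a = G.tgt e := by
    intro e a; simp [Multigraph.ends]
  -- existence of a third vertex
  have third : ∀ a b : V, ∃ c : V, c ≠ a ∧ c ≠ b := by
    intro a b
    by_contra h
    push_neg at h
    have hsub : (Finset.univ : Finset V) ⊆ {a, b} := by
      intro x _
      simp only [Finset.mem_insert, Finset.mem_singleton]
      rcases eq_or_ne x a with h' | h'
      · exact Or.inl h'
      · exact Or.inr (h x h')
    have hle := Finset.card_le_card hsub
    have h2 : ({a, b} : Finset V).card ≤ 2 := by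
      refine le_trans (Finset.card_insert_le _ _) ?_
      simp
    rw [Finset.card_univ] at hle
    omega
  -- existence of an edge between any two distinct vertices
  have L0 : ∀ a b : V, a ≠ b → ∃ e, G.ends e = {a, b} := by
    intro a b hab
    have h4 := hfour a b hab
    rcases isEmpty_or_nonempty {e : E // G.ends e = ({a, b} : Set V)} with h | h
    · rw [Nat.card_of_isEmpty] at h4; omega
    · obtain ⟨e, he⟩ := h.some
      exact ⟨e, he⟩
  -- the other endpoint of an edge
  have hother : ∀ (e : E) (v : V), v ∈ G.ends e → ∃ x, x ≠ v ∧ G.ends e = {v, x} := by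
    intro e v hv
    rcases (hmemG e v).mp hv with rfl | rfl
    · exact ⟨G.tgt e, Ne.symm (hloopless e), rfl⟩
    · exact ⟨G.src e, hloopless e, Set.pair_comm _ _⟩
  -- uniqueness of common endpoints in G'
  have L1 : ∀ e f : E, G.ends e ≠ G.ends f → ∀ a b : V', a ∈ G'.ends e → a ∈ G'.ends f →
      b ∈ G'.ends e → b ∈ G'.ends f → a = b := by
    intro e f hef a b hae haf hbe hbf
    by_contra hab
    have h1 : G'.ends e = {a, b} :=
      pair_eq_of_mem' hab ((hmem' e a).mp hae) ((hmem' e b).mp hbe)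
    have h2 : G'.ends f = {a, b} :=
      pair_eq_of_mem' hab ((hmem' f a).mp haf) ((hmem' f b).mp hbf)
    exact hef ((hparallel e f).mpr (h1.trans h2.symm))
  -- existence of common endpoints in G'
  have L2 : ∀ (v a b : V) (e f : E), v ≠ a → v ≠ b → a ≠ b →
      G.ends e = {v, a} → G.ends f = {v, b} →
      ∃ c : V', c ∈ G'.ends e ∧ c ∈ G'.ends f := by
    intro v a b e f hva hvb hab he hf
    obtain ⟨g, hg⟩ := L0 a b hab
    have htri : G.IsTriangle e f g :=
      ⟨a, v, b, Ne.symm hva, hvb, hab, he.trans (Set.pair_comm v a), hf, hg⟩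
    obtain ⟨x, y, z, _, _, _, he', hf', _⟩ := (htriangle e f g).mp htri
    exact ⟨y, by rw [he']; simp, by rw [hf']; simp⟩
  -- inequality of pairs
  have pairne : ∀ v a c : V, v ≠ a → v ≠ c → a ≠ c →
      ({v, a} : Set V) ≠ ({v, c} : Set V) := by
    intro v a c hva hvc hac h
    rcases Set.pair_eq_pair_iff.mp h with ⟨_, h2⟩ | ⟨h1, _⟩
    · exact hac h2
    · exact hvc h1
  -- the three-edge lemma
  have key : ∀ (v a b c : V) (e f g : E) (p q : V'),
      v ≠ a → v ≠ b → v ≠ c → a ≠ b → a ≠ c → b ≠ c →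
      G.ends e = {v, a} → G.ends f = {v, b} → G.ends g = {v, c} →
      p ∈ G'.ends e → p ∈ G'.ends f → q ∈ G'.ends e → q ∈ G'.ends g → p = q := by
    intro v a b c e f g p q hva hvb hvc hab hac hbc he hf hg hpe hpf hqe hqg
    by_contra hpq
    obtain ⟨r, hrf, hrg⟩ := L2 v b c f g hvb hvc hbc hf hg
    have hne_eg : G.ends e ≠ G.ends g := by rw [he, hg]; exact pairne v a c hva hvc hac
    have hne_ef : G.ends e ≠ G.ends f := by rw [he, hf]; exact pairne v a b hva hvb hab
    rcases eq_or_ne r p with rfl | hrp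
    · exact hpq (L1 e g hne_eg _ _ hpe hrg hqe hqg)
    rcases eq_or_ne r q with rfl | hrq
    · exact hpq (L1 e f hne_ef _ _ hpe hpf hqe hrf)
    · have hEe : G'.ends e = {q, p} :=
        pair_eq_of_mem' (Ne.symm hpq) ((hmem' e q).mp hqe) ((hmem' e p).mp hpe)
      have hEf : G'.ends f = {p, r} :=
        pair_eq_of_mem' (Ne.symm hrp) ((hmem' f p).mp hpf) ((hmem' f r).mp hrf)
      have hEg : G'.ends g = {q, r} :=
        pair_eq_of_mem' (Ne.symm hrq) ((hmem' g q).mp hqg) ((hmem' g r).mp hrg)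
      have htri' : G'.IsTriangle e f g :=
        ⟨q, p, r, Ne.symm hpq, Ne.symm hrp, Ne.symm hrq, hEe, hEf, hEg⟩
      obtain ⟨x, y, z, hxy, hyz, hxz, he', hf', hg'⟩ := (htriangle e f g).mpr htri'
      have hv1 : v ∈ ({x, y} : Set V) := by rw [← he', he]; simp
      have hv2 : v ∈ ({y, z} : Set V) := by rw [← hf', hf]; simp
      have hv3 : v ∈ ({x, z} : Set V) := by rw [← hg', hg]; simp
      simp only [Set.mem_insert_iff, Set.mem_singleton_iff] at hv1 hv2 hv3
      rcases hv1 with rfl | rfl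
      · rcases hv2 with h | h
        · exact hxy h
        · exact hxz h
      · rcases hv3 with h | h
        · exact hxy h.symm
        · exact hyz h
  -- choose reference edges for each vertex
  choose u hu hu' using fun v => third v v
  choose w hw1 hw2 using fun v => third v (u v)
  choose eu heu using fun v => L0 v (u v) (Ne.symm (hu v))
  choose ew hew using fun v => L0 v (w v) (Ne.symm (hw1 v))
  choose σ hσu hσw using fun v =>
    L2 v (u v) (w v) (eu v) (ew v) (Ne.symm (hu v)) (Ne.symm (hw1 v)) (Ne.symm (hw2 v))
      (heu v) (hew v)
  -- σ v lies on every edge incident to v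
  have hincident : ∀ (v : V) (e : E), v ∈ G.ends e → σ v ∈ G'.ends e := by
    intro v e hv
    obtain ⟨x, hxv, hex⟩ := hother e v hv
    rcases eq_or_ne x (u v) with rfl | hxu
    · rw [(hparallel _ _).mp (hex.trans (heu v).symm)]
      exact hσu v
    rcases eq_or_ne x (w v) with rfl | hxw
    · rw [(hparallel _ _).mp (hex.trans (hew v).symm)]
      exact hσw v
    · obtain ⟨q, hqe, hqe'⟩ := L2 v (u v) x (eu v) e (Ne.symm (hu v)) (Ne.symm hxv)
        (Ne.symm hxu) (heu v) hex
      have := key v (u v) (w v) x (eu v) (ew v) e (σ v) q (Ne.symm (hu v))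
        (Ne.symm (hw1 v)) (Ne.symm hxv) (Ne.symm (hw2 v)) (Ne.symm hxu) (Ne.symm hxw)
        (heu v) (hew v) hex (hσu v) (hσw v) hqe hqe'
      rw [this]; exact hqe'
  -- distinct vertices get distinct images
  have hdist : ∀ (e : E) (a b : V), a ≠ b → G.ends e = {a, b} → σ a ≠ σ b := by
    intro e a b hab he
    obtain ⟨c, hca, hcb⟩ := third a b
    obtain ⟨f, hf⟩ := L0 b c (Ne.symm hcb)
    obtain ⟨g, hg⟩ := L0 a c (Ne.symm hca)
    have htri : G.IsTriangle e f g := ⟨a, b, c, hab, Ne.symm hcb, Ne.symm hca, he, hf, hg⟩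
    obtain ⟨x, y, z, hxy, hyz, hxz, he', hf', hg'⟩ := (htriangle e f g).mp htri
    have hσa_e : σ a ∈ G'.ends e := hincident a e (by rw [he]; simp)
    have hσa_g : σ a ∈ G'.ends g := hincident a g (by rw [hg]; simp)
    have hσb_e : σ b ∈ G'.ends e := hincident b e (by rw [he]; simp)
    have hσb_f : σ b ∈ G'.ends f := hincident b f (by rw [hf]; simp)
    rw [he'] at hσa_e hσb_e
    rw [hg'] at hσa_g
    rw [hf'] at hσb_f
    simp only [Set.mem_insert_iff, Set.mem_singleton_iff] at hσa_e hσa_g hσb_e hσb_f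
    have ha : σ a = x := by
      rcases hσa_e with h | h
      · exact h
      · rcases hσa_g with h' | h'
        · exact h'
        · exact absurd (h.symm.trans h') hyz
    have hb : σ b = y := by
      rcases hσb_e with h | h
      · rcases hσb_f with h' | h'
        · exact h'
        · exact absurd (h.symm.trans h') hxz
      · exact h
    rw [ha, hb]
    exact hxy
  refine ⟨σ, ?_, ?_⟩
  · intro a b hab2
    by_contra hne
    obtain ⟨e, he⟩ := L0 a b hne
    exact hdist e a b hne he hab2
  · intro e
    have h1 : σ (G.src e) ∈ G'.ends e := hincident _ e (by simp [Multigraph.ends])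
    have h2 : σ (G.tgt e) ∈ G'.ends e := hincident _ e (by simp [Multigraph.ends])
    have hne := hdist e (G.src e) (G.tgt e) (hloopless e) rfl
    exact pair_eq_of_mem' hne ((hmem' e _).mp h1) ((hmem' e _).mp h2)
end
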